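/- arXiv:math/0209361 — 5 statements merged into one kernel-verified Lean document; each statement's English description precedes it below -/
import Mathlib

section
/- Let V, V₁, …, V_p be compact convex bodies in ℝⁿ with V = ∑ᵢ λᵢ • Vᵢ (Minkowski sum with scalars λᵢ > 0). If a supporting hyperplane Π of V is parallel to supporting hyperplanes Πᵢ of the Vᵢ (all with the same outward normal), and A = V ∩ Π, Aᵢ = Vᵢ ∩ Πᵢ, then A = ∑ᵢ λᵢ • Aᵢ. -/
open scoped RealInnerProductSpace

/-- Faces of a Minkowski combination in a common direction are the Minkowski
combination of the faces. -/
theorem face_minkowski_sum (n p : ℕ)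
    (V : Set (EuclideanSpace ℝ (Fin n))) (Vi : Fin p → Set (EuclideanSpace ℝ (Fin n)))
    (lam : Fin p → ℝ) (hlam : ∀ i, 0 < lam i)
    (hVc : IsCompact V) (hVconv : Convex ℝ V) (hVint : (interior V).Nonempty)
    (hVic : ∀ i, IsCompact (Vi i)) (hViconv : ∀ i, Convex ℝ (Vi i))
    (hViint : ∀ i, (interior (Vi i)).Nonempty)
    (hV : V = {x | ∃ f : Fin p → EuclideanSpace ℝ (Fin n),
      (∀ i, f i ∈ Vi i) ∧ x = ∑ i, lam i • f i})
    (u : EuclideanSpace ℝ (Fin n)) (hu : ‖u‖ = 1)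
    (Pl : Set (EuclideanSpace ℝ (Fin n)))
    (hPl : Pl = {x | ⟪x, u⟫ = sSup ((fun v => ⟪v, u⟫) '' V)})
    (Pli : Fin p → Set (EuclideanSpace ℝ (Fin n)))
    (hPli : ∀ i, Pli i = {x | ⟪x, u⟫ = sSup ((fun v => ⟪v, u⟫) '' Vi i)})
    (A : Set (EuclideanSpace ℝ (Fin n))) (hA : A = V ∩ Pl)
    (Ai : Fin p → Set (EuclideanSpace ℝ (Fin n))) (hAi : ∀ i, Ai i = Vi i ∩ Pli i) :
    A = {x | ∃ f : Fin p → EuclideanSpace ℝ (Fin n),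
      (∀ i, f i ∈ Ai i) ∧ x = ∑ i, lam i • f i} := by
  have hcont : Continuous (fun v : EuclideanSpace ℝ (Fin n) => ⟪v, u⟫) :=
    Continuous.inner continuous_id continuous_const
  set M : Fin p → ℝ := fun i => sSup ((fun v => ⟪v, u⟫) '' Vi i) with hM
  -- each Vi nonempty
  have hne : ∀ i, (Vi i).Nonempty := fun i =>
    ((hViint i).mono interior_subset)
  -- sup attained on each Vi
  have hattain : ∀ i, ∃ v ∈ Vi i, ⟪v, u⟫ = M i := by
    intro i
    have hc : IsCompact ((fun v => ⟪v, u⟫) '' Vi i) := (hVic i).image hcont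
    have hmem : M i ∈ (fun v => ⟪v, u⟫) '' Vi i :=
      hc.sSup_mem ((hne i).image _)
    obtain ⟨v, hv, hveq⟩ := hmem
    exact ⟨v, hv, hveq⟩
  have hle : ∀ i, ∀ v ∈ Vi i, ⟪v, u⟫ ≤ M i := by
    intro i v hv
    exact le_csSup ((hVic i).image hcont).bddAbove ⟨v, hv, rfl⟩
  -- value of x in terms of f
  have hval : ∀ f : Fin p → EuclideanSpace ℝ (Fin n),
      ⟪∑ i, lam i • f i, u⟫ = ∑ i, lam i * ⟪f i, u⟫ := by
    intro f
    rw [sum_inner]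
    exact Finset.sum_congr rfl fun i _ => real_inner_smul_left _ _ _
  -- the sup over V equals ∑ lam i * M i
  have hMsum : sSup ((fun v => ⟪v, u⟫) '' V) = ∑ i, lam i * M i := by
    apply le_antisymm
    · apply csSup_le (((hVint.mono interior_subset)).image _)
      rintro y ⟨x, hx, rfl⟩
      rw [hV] at hx
      obtain ⟨f, hf, rfl⟩ := hx
      dsimp only
      rw [hval]
      exact Finset.sum_le_sum fun i _ =>
        mul_le_mul_of_nonneg_left (hle i _ (hf i)) (hlam i).le
    · choose g hg hgeq using hattain
      have hgV : (∑ i, lam i • g i) ∈ V := by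
        rw [hV]; exact ⟨g, hg, rfl⟩
      have := le_csSup (hVc.image hcont).bddAbove ⟨_, hgV, rfl⟩
      dsimp only at this
      rw [hval] at this
      simpa [hgeq] using this
  ext x
  simp only [hA, hPl, hAi, hPli, Set.mem_inter_iff, Set.mem_setOf_eq, ← hM]
  constructor
  · rintro ⟨hxV, hxPl⟩
    rw [hV] at hxV
    obtain ⟨f, hf, rfl⟩ := hxV
    rw [hval, hMsum] at hxPl
    have hterm : ∀ i ∈ Finset.univ, lam i * ⟪f i, u⟫ = lam i * M i := by
      have h0 : ∑ i, (lam i * M i - lam i * ⟪f i, u⟫) = 0 := by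
        rw [Finset.sum_sub_distrib, hxPl, sub_self]
      have hnn : ∀ i ∈ Finset.univ, 0 ≤ lam i * M i - lam i * ⟪f i, u⟫ := fun i _ =>
        sub_nonneg.mpr (mul_le_mul_of_nonneg_left (hle i _ (hf i)) (hlam i).le)
      intro i hi
      have := (Finset.sum_eq_zero_iff_of_nonneg hnn).mp h0 i hi
      linarith
    refine ⟨f, fun i => ⟨hf i, ?_⟩, rfl⟩
    have := hterm i (Finset.mem_univ i)
    exact mul_left_cancel₀ (hlam i).ne' this
  · rintro ⟨f, hf, rfl⟩
    have hfV : ∀ i, f i ∈ Vi i := fun i => (hf i).1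
    refine ⟨by rw [hV]; exact ⟨f, hfV, rfl⟩, ?_⟩
    rw [hval, hMsum]
    exact Finset.sum_congr rfl fun i _ => by rw [(hf i).2]
end

section
/- Let V, V₁, …, V_p be compact convex bodies in ℝⁿ with V = ∑ᵢ λᵢ • Vᵢ, all λᵢ > 0. Then V is strictly convex if and only if each Vᵢ is strictly convex. -/
open Set

variable {E : Type*} [NormedAddCommGroup E] [NormedSpace ℝ E]

/-- Supporting functional at a non-interior point of a convex set with nonempty interior. -/
lemma support_at_non_interior {S : Set E} (hconv : Convex ℝ S) (hint : (interior S).Nonempty)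
    {m : E} (hm : m ∉ interior S) :
    ∃ f : E →L[ℝ] ℝ, f ≠ 0 ∧ ∀ z ∈ S, f z ≤ f m := by
  obtain ⟨f, hf⟩ := geometric_hahn_banach_open_point hconv.interior isOpen_interior hm
  obtain ⟨w, hw⟩ := hint
  have hwm : f w < f m := hf w hw
  refine ⟨f, ?_, ?_⟩
  · intro h
    rw [h] at hwm
    simp at hwm
  · intro z hz
    by_contra hzm
    push_neg at hzm
    set d := f z - f w with hd
    have hd0 : 0 < d := by simp only [hd]; linarith
    set t := ((f m - f w) / d + 1) / 2 with ht
    have h1 : (f m - f w) / d < 1 := (div_lt_one hd0).2 (by linarith)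
    have h2 : 0 < (f m - f w) / d := div_pos (by linarith) hd0
    have ht0 : 0 < t := by rw [ht]; linarith
    have ht1 : t < 1 := by rw [ht]; linarith
    have hcombo : (1 - t) • w + t • z ∈ interior S :=
      hconv.combo_interior_closure_mem_interior hw (subset_closure hz)
        (by linarith) (by linarith) (by ring)
    have hlt : (1 - t) * f w + t * f z < f m := by
      have := hf _ hcombo
      simpa [map_add, map_smul] using this
    have htd : f m - f w < t * d := by
      have h3 : (f m - f w) / d < t := by rw [ht]; linarith
      calc f m - f w = ((f m - f w) / d) * d := by field_simp
        _ < t * d := by exact mul_lt_mul_of_pos_right h3 hd0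
    have : (1 - t) * f w + t * f z = f w + t * d := by rw [hd]; ring
    linarith

/-- A point of a Minkowski combination where one component is interior is interior. -/
lemma sum_mem_interior {p : ℕ} (V : Set E) (Vi : Fin p → Set E) (lam : Fin p → ℝ)
    (hlam : ∀ i, 0 < lam i)
    (hV : V = {x | ∃ f : Fin p → E, (∀ i, f i ∈ Vi i) ∧ x = ∑ i, lam i • f i})
    (h : Fin p → E) (hmem : ∀ i, h i ∈ Vi i) (i0 : Fin p) (hi0 : h i0 ∈ interior (Vi i0)) :
    ∑ i, lam i • h i ∈ interior V := by
  obtain ⟨U, hUsub, hUopen, hU⟩ := mem_interior.1 hi0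
  obtain ⟨ε, hε, hball⟩ := Metric.isOpen_iff.1 hUopen _ hU
  set M := ∑ i, lam i • h i with hM
  refine mem_interior.2 ⟨Metric.ball M (lam i0 * ε), ?_, Metric.isOpen_ball,
    Metric.mem_ball_self (mul_pos (hlam i0) hε)⟩
  intro w hw
  set z := h i0 + (lam i0)⁻¹ • (w - M) with hz
  have hzmem : z ∈ Vi i0 := by
    apply hUsub; apply hball
    rw [Metric.mem_ball, dist_eq_norm]
    have : z - h i0 = (lam i0)⁻¹ • (w - M) := by rw [hz]; abel
    rw [this, norm_smul, Real.norm_eq_abs, abs_of_pos (inv_pos.2 (hlam i0))]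
    have hwM : ‖w - M‖ < lam i0 * ε := by
      rw [← dist_eq_norm]; exact hw
    calc (lam i0)⁻¹ * ‖w - M‖ < (lam i0)⁻¹ * (lam i0 * ε) :=
          mul_lt_mul_of_pos_left hwM (inv_pos.2 (hlam i0))
      _ = ε := by
          rw [← mul_assoc, inv_mul_cancel₀ (hlam i0).ne', one_mul]
  rw [hV]
  refine ⟨Function.update h i0 z, fun i => ?_, ?_⟩
  · by_cases hi : i = i0
    · subst hi; simpa using hzmem
    · simpa [Function.update_of_ne hi] using hmem i
  · have key : ∑ i, (lam i • Function.update h i0 z i - lam i • h i)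
        = lam i0 • z - lam i0 • h i0 := by
      rw [Finset.sum_eq_single i0]
      · simp
      · intro j _ hj; simp [Function.update_of_ne hj]
      · intro hc; exact absurd (Finset.mem_univ i0) hc
    have hsum : ∑ i, lam i • Function.update h i0 z i
        = M + (lam i0 • z - lam i0 • h i0) := by
      rw [← key, Finset.sum_sub_distrib]
      abel
    rw [hsum, hz, smul_add, smul_smul, mul_inv_cancel₀ (hlam i0).ne', one_smul]
    abel

/-- A Minkowski combination (with positive coefficients) of compact convex bodies is
strictly convex iff each summand is strictly convex. -/
theorem strictConvex_minkowski_sum_iff (n p : ℕ)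
    (V : Set (EuclideanSpace ℝ (Fin n))) (Vi : Fin p → Set (EuclideanSpace ℝ (Fin n)))
    (lam : Fin p → ℝ) (hlam : ∀ i, 0 < lam i)
    (hVc : IsCompact V) (hVconv : Convex ℝ V) (hVint : (interior V).Nonempty)
    (hVic : ∀ i, IsCompact (Vi i)) (hViconv : ∀ i, Convex ℝ (Vi i))
    (hViint : ∀ i, (interior (Vi i)).Nonempty)
    (hV : V = {x | ∃ f : Fin p → EuclideanSpace ℝ (Fin n),
      (∀ i, f i ∈ Vi i) ∧ x = ∑ i, lam i • f i}) :
    (∀ x ∈ frontier V, x ∈ Set.extremePoints ℝ V) ↔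
      ∀ i, ∀ x ∈ frontier (Vi i), x ∈ Set.extremePoints ℝ (Vi i) := by
  constructor
  · -- V strictly convex → each Vi strictly convex
    intro hstrict i0 x hx
    rw [(hVic i0).isClosed.frontier_eq] at hx
    rw [mem_extremePoints]
    refine ⟨hx.1, ?_⟩
    intro a ha b hb hseg
    by_cases hab : a = b
    · subst hab
      rw [openSegment_same] at hseg
      exact ⟨hseg.symm, hseg.symm⟩
    exfalso
    -- supporting functional at x
    obtain ⟨f, hf0, hfle⟩ :=
      support_at_non_interior (hViconv i0) (hViint i0) hx.2
    obtain ⟨s, t, hs, ht, hst, hxe⟩ := hseg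
    have hfa : f a ≤ f x := hfle a ha
    have hfb : f b ≤ f x := hfle b hb
    have hfx : s * f a + t * f b = f x := by
      rw [← hxe]; simp [map_add, map_smul]
    have hsum1 : s * f x + t * f x = f x := by rw [← add_mul, hst, one_mul]
    have hfa' : f a = f x := by
      by_contra hne
      have h1 : s * f a < s * f x := mul_lt_mul_of_pos_left (lt_of_le_of_ne hfa hne) hs
      have h2 : t * f b ≤ t * f x := mul_le_mul_of_nonneg_left hfb ht.le
      linarith
    have hfb' : f b = f x := by
      by_contra hne
      have h1 : t * f b < t * f x := mul_lt_mul_of_pos_left (lt_of_le_of_ne hfb hne) ht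
      have h2 : s * f a ≤ s * f x := mul_le_mul_of_nonneg_left hfa hs.le
      linarith
    -- choose maximizers of f on each Vi
    have hgex : ∀ i : Fin p, ∃ g ∈ Vi i, IsMaxOn f (Vi i) g := fun i =>
      (hVic i).exists_isMaxOn ⟨_, interior_subset (hViint i).choose_spec⟩
        f.continuous.continuousOn
    choose g hgmem hgmax using hgex
    set gx := Function.update g i0 x with hgx
    set ga := Function.update g i0 a with hga
    set gb := Function.update g i0 b with hgb
    have hmemx : ∀ i, gx i ∈ Vi i := by
      intro i; by_cases hi : i = i0
      · subst hi; simpa [hgx] using hx.1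
      · simpa [hgx, Function.update_of_ne hi] using hgmem i
    have hmema : ∀ i, ga i ∈ Vi i := by
      intro i; by_cases hi : i = i0
      · subst hi; simpa [hga] using ha
      · simpa [hga, Function.update_of_ne hi] using hgmem i
    have hmemb : ∀ i, gb i ∈ Vi i := by
      intro i; by_cases hi : i = i0
      · subst hi; simpa [hgb] using hb
      · simpa [hgb, Function.update_of_ne hi] using hgmem i
    set X := ∑ i, lam i • gx i with hX
    set A := ∑ i, lam i • ga i with hA
    set B := ∑ i, lam i • gb i with hB
    have hXV : X ∈ V := by rw [hV]; exact ⟨gx, hmemx, rfl⟩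
    have hAV : A ∈ V := by rw [hV]; exact ⟨ga, hmema, rfl⟩
    have hBV : B ∈ V := by rw [hV]; exact ⟨gb, hmemb, rfl⟩
    -- X lies in the open segment (A, B)
    have hXseg : X ∈ openSegment ℝ A B := by
      refine ⟨s, t, hs, ht, hst, ?_⟩
      rw [hA, hB, hX, Finset.smul_sum, Finset.smul_sum, ← Finset.sum_add_distrib]
      apply Finset.sum_congr rfl
      intro i _
      by_cases hi : i = i0
      · subst hi
        simp only [hga, hgb, hgx, Function.update_self]
        rw [← hxe, smul_add]
        rw [smul_comm s (lam i), smul_comm t (lam i)]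
      · simp only [hga, hgb, hgx, Function.update_of_ne hi]
        rw [smul_comm s (lam i), smul_comm t (lam i), ← smul_add, ← add_smul, hst, one_smul]
    -- A ≠ B
    have hAB : A ≠ B := by
      intro hEq
      apply hab
      have key : ∑ i, (lam i • ga i - lam i • gb i) = lam i0 • a - lam i0 • b := by
        rw [Finset.sum_eq_single i0]
        · simp [hga, hgb]
        · intro j _ hj; simp [hga, hgb, Function.update_of_ne hj]
        · intro hc; exact absurd (Finset.mem_univ i0) hc
      rw [Finset.sum_sub_distrib, ← hA, ← hB, hEq, sub_self] at key
      have : lam i0 • (a - b) = 0 := by rw [smul_sub, ← key]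
      have := smul_eq_zero.1 this
      rcases this with h | h
      · exact absurd h (hlam i0).ne'
      · exact sub_eq_zero.1 h
    -- f attains its max over V at X
    have hXmax : ∀ v ∈ V, f v ≤ f X := by
      intro v hv
      rw [hV] at hv
      obtain ⟨k, hk, rfl⟩ := hv
      have : ∀ u : Fin p → EuclideanSpace ℝ (Fin n),
          f (∑ i, lam i • u i) = ∑ i, lam i * f (u i) := by
        intro u; rw [map_sum]; simp [map_smul]
      rw [this, hX, this]
      apply Finset.sum_le_sum
      intro i _
      apply mul_le_mul_of_nonneg_left _ (hlam i).le
      by_cases hi : i = i0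
      · subst hi
        simpa [hgx] using hfle _ (hk i)
      · simp only [hgx, Function.update_of_ne hi]
        exact hgmax i (hk i)
    -- hence X is not interior, so X is a frontier point of V
    have hXnotint : X ∉ interior V := by
      intro hXint
      obtain ⟨v, hv⟩ : ∃ v, f v ≠ 0 := by
        by_contra hc
        push_neg at hc
        exact hf0 (ContinuousLinearMap.ext fun v => by simp [hc v])
      set v' := (f v)⁻¹ • v with hv'
      have hfv' : f v' = 1 := by simp [hv', map_smul, inv_mul_cancel₀ hv]
      have hv'0 : v' ≠ 0 := fun h => by simp [h] at hfv'
      have hv'n : 0 < ‖v'‖ := norm_pos_iff.2 hv'0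
      obtain ⟨ε, hε, hball⟩ := Metric.isOpen_iff.1 isOpen_interior _ hXint
      set δ := ε / (2 * ‖v'‖) with hδ
      have hδ0 : 0 < δ := by positivity
      have hw : X + δ • v' ∈ V := by
        apply interior_subset
        apply hball
        rw [Metric.mem_ball, dist_eq_norm]
        have : X + δ • v' - X = δ • v' := by abel
        rw [this, norm_smul, Real.norm_eq_abs, abs_of_pos hδ0, hδ]
        have hnorm : ε / (2 * ‖v'‖) * ‖v'‖ = ε / 2 := by
          field_simp
        rw [hnorm]
        linarith
      have := hXmax _ hw
      rw [map_add, map_smul, hfv', smul_eq_mul, mul_one] at this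
      linarith
    have hXfr : X ∈ frontier V := by
      rw [hVc.isClosed.frontier_eq]
      exact ⟨hXV, hXnotint⟩
    obtain ⟨hAX, hBX⟩ := ((mem_extremePoints).1 (hstrict X hXfr)).2 A hAV B hBV hXseg
    exact hAB (hAX.trans hBX.symm)
  · -- each Vi strictly convex → V strictly convex
    intro hstrict z hz
    rw [hVc.isClosed.frontier_eq] at hz
    rw [mem_extremePoints]
    refine ⟨hz.1, ?_⟩
    intro x hx y hy hseg
    by_cases hxy : x = y
    · subst hxy
      rw [openSegment_same] at hseg
      exact ⟨hseg.symm, hseg.symm⟩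
    exfalso
    rw [hV] at hx hy
    obtain ⟨fx, hfx, rfl⟩ := hx
    obtain ⟨fy, hfy, rfl⟩ := hy
    obtain ⟨s, t, hs, ht, hst, hze⟩ := hseg
    obtain ⟨i0, hi0⟩ : ∃ i0, fx i0 ≠ fy i0 := by
      by_contra hc
      push_neg at hc
      exact hxy (by simp [funext hc])
    set h := fun i => s • fx i + t • fy i with hh
    have hhmem : ∀ i, h i ∈ Vi i := fun i =>
      (hViconv i) (hfx i) (hfy i) hs.le ht.le hst
    have hhint : h i0 ∈ interior (Vi i0) := by
      by_contra hc
      have hfr : h i0 ∈ frontier (Vi i0) := by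
        rw [(hVic i0).isClosed.frontier_eq]
        exact ⟨hhmem i0, hc⟩
      have hext := (mem_extremePoints.1 (hstrict i0 _ hfr)).2
        (fx i0) (hfx i0) (fy i0) (hfy i0) ⟨s, t, hs, ht, hst, rfl⟩
      exact hi0 (hext.1.trans hext.2.symm)
    have hzsum : z = ∑ i, lam i • h i := by
      rw [← hze, hh, Finset.smul_sum, Finset.smul_sum, ← Finset.sum_add_distrib]
      apply Finset.sum_congr rfl
      intro i _
      rw [smul_add, smul_comm s (lam i), smul_comm t (lam i)]
    have : z ∈ interior V := by
      rw [hzsum]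
      exact sum_mem_interior V Vi lam hlam hV h hhmem i0 hhint
    exact hz.2 this
end

section
/- For every t ∈ (0,1] and every convex set V ⊆ ℝⁿ containing 0, the image Ψ_t(V) of V under the map Ψ_t(x) = x/(1 + t‖x‖) is convex. -/
/-!
Every image point satisfies `Ψ_t x = (1 - t‖Ψ_t x‖) • x`, and `y ↦ (1 - t‖y‖)⁻¹ • y` inverts
`Ψ_t` wherever `t‖y‖ < 1`. For a convex combination `y = l y₁ + m y₂` of image points
`yᵢ = cᵢ xᵢ`, the triangle inequality gives `1 - t‖y‖ ≥ l c₁ + m c₂`, so the candidate preimage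
`(1 - t‖y‖)⁻¹ • y` is a combination of `x₁, x₂` with nonnegative weights of sum at most `1`; it
lies in `V` because `V` is convex and contains `0`.
-/

theorem Convex.smul_add_smul_mem_of_zero_mem {E : Type*} [AddCommGroup E] [Module ℝ E]
    {V : Set E} (hV : Convex ℝ V) (h0 : (0 : E) ∈ V) {x y : E} (hx : x ∈ V) (hy : y ∈ V)
    {a b : ℝ} (ha : 0 ≤ a) (hb : 0 ≤ b) (hab : a + b ≤ 1) : a • x + b • y ∈ V := by
  have h := hV.sum_mem (t := Finset.univ) (w := ![1 - a - b, a, b]) (z := ![0, x, y])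
    (fun i _ ↦ by fin_cases i <;> simp <;> linarith) (by simp [Fin.sum_univ_three]; ring)
    (fun i _ ↦ by fin_cases i <;> assumption)
  simpa [Fin.sum_univ_three] using h

section

variable {E : Type*} [NormedAddCommGroup E] [NormedSpace ℝ E]

noncomputable def radialMap (t : ℝ) (x : E) : E := (1 + t * ‖x‖)⁻¹ • x

variable {t : ℝ}

theorem one_sub_mul_norm_radialMap (ht : 0 ≤ t) (x : E) :
    1 - t * ‖radialMap t x‖ = (1 + t * ‖x‖)⁻¹ := by
  have hpos : 0 < 1 + t * ‖x‖ := by positivity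
  rw [radialMap, norm_smul, Real.norm_of_nonneg (inv_nonneg.2 hpos.le)]
  field_simp
  ring

theorem radialMap_eq_smul (ht : 0 ≤ t) (x : E) :
    radialMap t x = (1 - t * ‖radialMap t x‖) • x := by
  rw [one_sub_mul_norm_radialMap ht, radialMap]

theorem radialMap_inv_smul {y : E} (hy : 0 < 1 - t * ‖y‖) :
    radialMap t ((1 - t * ‖y‖)⁻¹ • y) = y := by
  have key : 1 + t * ‖(1 - t * ‖y‖)⁻¹ • y‖ = (1 - t * ‖y‖)⁻¹ := by
    rw [norm_smul, Real.norm_of_nonneg (inv_nonneg.2 hy.le)]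
    field_simp
    ring
  rw [radialMap, key, inv_inv, smul_inv_smul₀ hy.ne']

theorem Convex.image_radialMap (ht : 0 ≤ t) {V : Set E} (hV : Convex ℝ V)
    (h0 : (0 : E) ∈ V) :
    Convex ℝ (radialMap t '' V) := by
  rintro _ ⟨x₁, hx₁, rfl⟩ _ ⟨x₂, hx₂, rfl⟩ l m hl hm hlm
  set y₁ := radialMap t x₁
  set y₂ := radialMap t x₂
  set c₁ := 1 - t * ‖y₁‖
  set c₂ := 1 - t * ‖y₂‖
  have hc₁ : 0 < c₁ := by rw [show c₁ = _ from one_sub_mul_norm_radialMap ht x₁]; positivity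
  have hc₂ : 0 < c₂ := by rw [show c₂ = _ from one_sub_mul_norm_radialMap ht x₂]; positivity
  set c := 1 - t * ‖l • y₁ + m • y₂‖
  have hc : l * c₁ + m * c₂ ≤ c := by
    have hnorm : ‖l • y₁ + m • y₂‖ ≤ l * ‖y₁‖ + m * ‖y₂‖ := (norm_add_le _ _).trans_eq
      (by rw [norm_smul_of_nonneg hl, norm_smul_of_nonneg hm])
    have := mul_le_mul_of_nonneg_left hnorm ht
    simp only [c, c₁, c₂]
    linarith
  have hc_pos : 0 < c := ((convex_Ioi 0) hc₁ hc₂ hl hm hlm).trans_le hc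
  refine ⟨c⁻¹ • (l • y₁ + m • y₂), ?_, radialMap_inv_smul hc_pos⟩
  have hcombo :
      c⁻¹ • (l • y₁ + m • y₂) = (c⁻¹ * (l * c₁)) • x₁ + (c⁻¹ * (m * c₂)) • x₂ := by
    rw [show y₁ = c₁ • x₁ from radialMap_eq_smul ht x₁,
      show y₂ = c₂ • x₂ from radialMap_eq_smul ht x₂]
    simp only [smul_add, smul_smul]
  rw [hcombo]
  refine hV.smul_add_smul_mem_of_zero_mem h0 hx₁ hx₂ (by positivity) (by positivity) ?_
  rw [← mul_add]
  exact inv_mul_le_one_of_le₀ hc hc_pos.le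

end

/-- The radial map `Ψ_t(x) = x/(1+t‖x‖)` maps convex sets containing the origin
to convex sets. -/
theorem psi_image_convex (n : ℕ) (t : ℝ) (ht : t ∈ Set.Ioc (0:ℝ) 1)
    (Ψ : EuclideanSpace ℝ (Fin n) → EuclideanSpace ℝ (Fin n))
    (hΨ : ∀ x, Ψ x = (1 + t * ‖x‖)⁻¹ • x)
    (V : Set (EuclideanSpace ℝ (Fin n))) (hV : Convex ℝ V) (h0 : (0:EuclideanSpace ℝ (Fin n)) ∈ V) :
    Convex ℝ (Ψ '' V) := by
  obtain rfl : Ψ = radialMap t := funext hΨ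
  exact hV.image_radialMap ht.1.le h0
end

section
/- For every t ∈ (0,1] and every compact convex body V ⊆ ℝⁿ (compact convex with 0 in the interior), the image Ψ_t(V) of V under Ψ_t(x) = x/(1 + t‖x‖) is strictly convex, i.e., every boundary point of Ψ_t(V) is an extreme point of Ψ_t(V). -/
/-!
With `g` the gauge of `V`, the map `Ψ_t` sends `V` onto the sublevel set `{f ≤ 1}` of the
sublinear function `f = g + t‖·‖`; its inverse there is `y ↦ y / (1 - t‖y‖)`. If a point `x` with
`f x = 1` lies strictly inside a segment `[x₁, x₂]` of `{f ≤ 1}`, then all inequalities in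
`1 = f x ≤ a f x₁ + b f x₂ ≤ 1` are equalities. In particular the triangle inequality for the
(strictly convex) norm is an equality, so `x₁` and `x₂` lie on a common ray, and positive
homogeneity together with `f x₁ = f x₂ = 1` forces `x₁ = x₂ = x`.
-/

open Set

theorem SameRay.eq_of_apply_eq {R M : Type*} [Field R] [LinearOrder R] [IsStrictOrderedRing R]
    [AddCommGroup M] [Module R M] {f : M → R} (hf : ∀ r : R, 0 ≤ r → ∀ x, f (r • x) = r * f x)
    {x y : M} (h : SameRay R x y) (hxy : f x = f y) (hx : f x ≠ 0) : x = y := by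
  have hf0 : f 0 = 0 := by simpa using hf 0 le_rfl 0
  rcases h with rfl | rfl | ⟨r₁, r₂, hr₁, hr₂, hr⟩
  · exact absurd hf0 hx
  · exact absurd (hxy.trans hf0) hx
  · have hr_eq : r₁ = r₂ := by
      have := congrArg f hr
      rw [hf r₁ hr₁.le, hf r₂ hr₂.le, ← hxy] at this
      exact mul_right_cancel₀ hx this
    subst hr_eq
    exact smul_right_injective M hr₁.ne' hr

section Sublinear

variable {E : Type*} [NormedAddCommGroup E] [NormedSpace ℝ E] {p : E → ℝ}

theorem add_mul_norm_smul_of_nonneg (hp_smul : ∀ r : ℝ, 0 ≤ r → ∀ x, p (r • x) = r * p x)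
    (t r : ℝ) (hr : 0 ≤ r) (x : E) :
    p (r • x) + t * ‖r • x‖ = r * (p x + t * ‖x‖) := by
  rw [hp_smul r hr, norm_smul_of_nonneg hr]
  ring

theorem mem_extremePoints_sublevel_add_mul_norm [StrictConvexSpace ℝ E]
    (hp_add : ∀ x y, p (x + y) ≤ p x + p y) (hp_smul : ∀ r : ℝ, 0 ≤ r → ∀ x, p (r • x) = r * p x)
    {t : ℝ} (ht : 0 < t) {x : E} (hx : p x + t * ‖x‖ = 1) :
    x ∈ extremePoints ℝ {y | p y + t * ‖y‖ ≤ 1} := by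
  refine mem_extremePoints_iff_left.2 ⟨hx.le, ?_⟩
  rintro x₁ (hx₁ : p x₁ + t * ‖x₁‖ ≤ 1) x₂ (hx₂ : p x₂ + t * ‖x₂‖ ≤ 1) ⟨a, b, ha, hb, hab, rfl⟩
  have hp : p (a • x₁ + b • x₂) ≤ a * p x₁ + b * p x₂ := by
    rw [← hp_smul a ha.le, ← hp_smul b hb.le]
    exact hp_add _ _
  have hnorm : ‖a • x₁ + b • x₂‖ ≤ a * ‖x₁‖ + b * ‖x₂‖ := by
    rw [← norm_smul_of_nonneg ha.le, ← norm_smul_of_nonneg hb.le]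
    exact norm_add_le _ _
  have hnorm_eq : ‖a • x₁ + b • x₂‖ = a * ‖x₁‖ + b * ‖x₂‖ := by nlinarith
  have hx₁_eq : p x₁ + t * ‖x₁‖ = 1 := by nlinarith
  have hx₂_eq : p x₂ + t * ‖x₂‖ = 1 := by nlinarith
  have hray : SameRay ℝ x₁ x₂ := by
    have : SameRay ℝ (a • x₁) (b • x₂) := by
      rw [sameRay_iff_norm_add, hnorm_eq, norm_smul_of_nonneg ha.le, norm_smul_of_nonneg hb.le]
    simpa [inv_smul_smul₀ ha.ne', inv_smul_smul₀ hb.ne'] using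
      (this.pos_smul_left (inv_pos.2 ha)).pos_smul_right (inv_pos.2 hb)
  have hx₁₂ : x₁ = x₂ := hray.eq_of_apply_eq (f := fun y => p y + t * ‖y‖)
    (add_mul_norm_smul_of_nonneg hp_smul t) (hx₁_eq.trans hx₂_eq.symm) (by simp [hx₁_eq])
  rw [← hx₁₂, Convex.combo_self hab]

end Sublinear

section RadialContraction

variable {E : Type*} [NormedAddCommGroup E] [NormedSpace ℝ E]

noncomputable def radialContraction (t : ℝ) (x : E) : E := (1 + t * ‖x‖)⁻¹ • x

theorem radialContraction_inv_smul {t : ℝ} {y : E} (hy : t * ‖y‖ < 1) :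
    radialContraction t ((1 - t * ‖y‖)⁻¹ • y) = y := by
  have hc : 0 < (1 - t * ‖y‖)⁻¹ := inv_pos.2 (by linarith)
  have hden : 1 + t * ‖(1 - t * ‖y‖)⁻¹ • y‖ = (1 - t * ‖y‖)⁻¹ := by
    rw [norm_smul_of_nonneg hc.le]
    field_simp [(by linarith : 1 - t * ‖y‖ ≠ 0)]
    ring
  rw [radialContraction, hden, smul_smul, inv_mul_cancel₀ hc.ne', one_smul]

theorem image_radialContraction {s : Set E} (hs : Convex ℝ s) (hs₀ : s ∈ nhds 0)
    (hsc : IsClosed s) (hsb : Bornology.IsBounded s) {t : ℝ} (ht : 0 ≤ t) :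
    radialContraction t '' s = {y | gauge s y + t * ‖y‖ ≤ 1} := by
  have hmem : ∀ x, x ∈ s ↔ gauge s x ≤ 1 := fun x => by
    rw [gauge_le_one_iff_mem_closure hs hs₀, hsc.closure_eq]
  have hgauge_smul : ∀ r : ℝ, 0 ≤ r → ∀ x : E, gauge s (r • x) = r * gauge s x :=
    fun r hr x => gauge_smul_of_nonneg hr x
  ext y
  constructor
  · rintro ⟨x, hx, rfl⟩
    have hden : 0 < 1 + t * ‖x‖ := by positivity
    change gauge s ((1 + t * ‖x‖)⁻¹ • x) + t * ‖(1 + t * ‖x‖)⁻¹ • x‖ ≤ 1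
    rw [add_mul_norm_smul_of_nonneg hgauge_smul t _ (inv_pos.2 hden).le,
      inv_mul_le_one₀ hden]
    linarith [(hmem x).1 hx]
  · intro (hy : gauge s y + t * ‖y‖ ≤ 1)
    have hty : t * ‖y‖ < 1 := by
      rcases eq_or_ne y 0 with rfl | hy0
      · simp
      · have := (gauge_pos (absorbent_nhds_zero hs₀)
          (NormedSpace.isVonNBounded_of_isBounded ℝ hsb)).2 hy0
        linarith
    refine ⟨(1 - t * ‖y‖)⁻¹ • y, ?_, radialContraction_inv_smul hty⟩
    rw [hmem, hgauge_smul _ (inv_pos.2 (by linarith)).le, inv_mul_le_one₀ (by linarith)]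
    linarith

end RadialContraction

/-- The radial map `Ψ_t(x) = x/(1+t‖x‖)` maps a compact convex body with `0` in its
interior to a strictly convex body: every boundary point of the image is extreme. -/
theorem psi_image_strictly_convex (n : ℕ) (t : ℝ) (ht : t ∈ Set.Ioc (0:ℝ) 1)
    (Ψ : EuclideanSpace ℝ (Fin n) → EuclideanSpace ℝ (Fin n))
    (hΨ : ∀ x, Ψ x = (1 + t * ‖x‖)⁻¹ • x)
    (V : Set (EuclideanSpace ℝ (Fin n)))
    (hVc : IsCompact V) (hVconv : Convex ℝ V)
    (h0 : (0:EuclideanSpace ℝ (Fin n)) ∈ interior V) :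
    ∀ x ∈ frontier (Ψ '' V), x ∈ Set.extremePoints ℝ (Ψ '' V) := by
  have hV₀ : V ∈ nhds 0 := mem_interior_iff_mem_nhds.1 h0
  have hΨ_eq : Ψ = radialContraction t := funext hΨ
  rw [hΨ_eq, image_radialContraction hVconv hV₀ hVc.isClosed hVc.isBounded ht.1.le]
  intro x hx
  have hcont : Continuous fun y => gauge V y + t * ‖y‖ :=
    (continuous_gauge hVconv hV₀).add (continuous_const.mul continuous_norm)
  exact mem_extremePoints_sublevel_add_mul_norm (gauge_add_le hVconv (absorbent_nhds_zero hV₀))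
    (fun r hr y => gauge_smul_of_nonneg hr y) ht.1 (frontier_le_subset_eq hcont continuous_const hx)
end

section
/- Let V ⊆ ℝⁿ be a compact convex body symmetric about 0 (so -V = V) that is not a Euclidean ball centered at 0, let H ≤ O(n) be the stabilizer of V under the orthogonal group action, and let L ⊆ ∂V be a finite subset with 0 ∈ interior(conv L). Then W := conv(H · L) is a compact convex body, symmetric about 0, with nonempty interior, which is NOT strictly convex (some boundary point of W fails to be an extreme point). -/
/-! If every boundary point of `W = conv (H • L)` were extreme, `∂W` would lie in the orbit
`H • L`, whose points take only the finitely many norms `‖x‖`, `x ∈ L`. In dimension `≥ 2` the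
radial map `x ↦ x / gauge W x` sends the connected set `ℝⁿ \ {0}` onto `∂W`, so its norm is
constant and `W` is a ball. As `∂W ⊆ H • L ⊆ ∂V`, the gauges of `W` and `V` agree, so `V = W`
is a ball too. In dimension `≤ 1` every symmetric convex body is a ball. Compactness of `W`
comes from `H` being a closed subset of the compact orthogonal group, together with
Carathéodory's theorem. -/

open Bornology Metric Set
open scoped Topology

variable {E : Type*} [NormedAddCommGroup E] [NormedSpace ℝ E]

protected theorem IsCompact.convexHull [FiniteDimensional ℝ E] {s : Set E} (hs : IsCompact s) :
    IsCompact (convexHull ℝ s) := by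
  let combination (k : ℕ) (p : (Fin k → ℝ) × (Fin k → E)) : E := ∑ i, p.1 i • p.2 i
  have hcover : convexHull ℝ s = ⋃ k ∈ Finset.range (Module.finrank ℝ E + 2),
      combination k '' (stdSimplex ℝ (Fin k) ×ˢ univ.pi fun _ => s) := by
    refine Subset.antisymm (fun x hx => ?_) ?_
    · obtain ⟨ι, _, z, w, hzs, hind, hw₀, hw₁, rfl⟩ := eq_pos_convex_span_of_mem_convexHull hx
      have hcard : Fintype.card ι < Module.finrank ℝ E + 2 :=
        Nat.lt_succ_of_le (hind.card_le_finrank_succ.trans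
          (Nat.succ_le_succ (Submodule.finrank_le _)))
      let e := (Fintype.equivFin ι).symm
      refine mem_biUnion (Finset.mem_range.2 hcard) ⟨(w ∘ e, z ∘ e),
        ⟨⟨fun i => (hw₀ _).le, ?_⟩, fun i _ => hzs ⟨_, rfl⟩⟩, e.sum_comp fun i => w i • z i⟩
      simpa only [Function.comp_apply, e.sum_comp] using hw₁
    · refine iUnion₂_subset fun k _ => ?_
      rintro _ ⟨⟨w, z⟩, ⟨⟨hw₀, hw₁⟩, hz⟩, rfl⟩
      exact (convex_convexHull ℝ s).sum_mem (fun i _ => hw₀ i) hw₁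
        fun i _ => subset_convexHull ℝ s (hz i (mem_univ i))
  rw [hcover]
  refine (Finset.range _).isCompact_biUnion fun k _ =>
    ((isCompact_stdSimplex ℝ (Fin k)).prod (isCompact_univ_pi fun _ => hs)).image ?_
  fun_prop

section Gauge

variable {s t : Set E}

theorem gauge_pos_of_isBounded (hs₀ : s ∈ 𝓝 0) (hb : IsBounded s) {x : E} (hx : x ≠ 0) :
    0 < gauge s x :=
  (gauge_pos (absorbent_nhds_zero hs₀) (NormedSpace.isVonNBounded_iff ℝ |>.2 hb)).2 hx

theorem inv_gauge_smul_mem_frontier (hc : Convex ℝ s) (hs₀ : s ∈ 𝓝 0) (hb : IsBounded s)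
    {x : E} (hx : x ≠ 0) : (gauge s x)⁻¹ • x ∈ frontier s := by
  have hpos := gauge_pos_of_isBounded hs₀ hb hx
  rw [← gauge_eq_one_iff_mem_frontier hc hs₀, gauge_smul_of_nonneg (inv_nonneg.2 hpos.le),
    smul_eq_mul, inv_mul_cancel₀ hpos.ne']

theorem Convex.eq_of_gauge_eq (hsc : Convex ℝ s) (hs₀ : s ∈ 𝓝 0) (hs : IsClosed s)
    (htc : Convex ℝ t) (ht₀ : t ∈ 𝓝 0) (ht : IsClosed t) (h : gauge s = gauge t) : s = t := by
  ext x
  rw [← hs.closure_eq, ← ht.closure_eq, ← gauge_le_one_iff_mem_closure hsc hs₀,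
    ← gauge_le_one_iff_mem_closure htc ht₀, h]

theorem Convex.eq_of_frontier_subset_frontier (hsc : Convex ℝ s) (hs₀ : s ∈ 𝓝 0)
    (hs : IsClosed s) (hb : IsBounded s) (htc : Convex ℝ t) (ht₀ : t ∈ 𝓝 0) (ht : IsClosed t)
    (h : frontier s ⊆ frontier t) : s = t := by
  refine hsc.eq_of_gauge_eq hs₀ hs htc ht₀ ht (funext fun x => ?_)
  rcases eq_or_ne x 0 with rfl | hx
  · simp only [gauge_zero]
  have hpos := gauge_pos_of_isBounded hs₀ hb hx
  have hfr := (gauge_eq_one_iff_mem_frontier htc ht₀).2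
    (h (inv_gauge_smul_mem_frontier hsc hs₀ hb hx))
  rwa [gauge_smul_of_nonneg (inv_nonneg.2 hpos.le), smul_eq_mul, inv_mul_eq_one₀ hpos.ne']
    at hfr

theorem Convex.exists_eq_closedBall_of_finite_norm_image_frontier
    (hrank : 1 < Module.rank ℝ E) (hc : Convex ℝ s) (hs₀ : s ∈ 𝓝 0) (hs : IsClosed s)
    (hb : IsBounded s) (hfin : (norm '' frontier s).Finite) : ∃ r, s = closedBall 0 r := by
  have : Nontrivial E := rank_pos_iff_nontrivial.1 (zero_lt_one.trans hrank)
  obtain ⟨x₀, hx₀⟩ := exists_ne (0 : E)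
  let ρ (x : E) : ℝ := ‖(gauge s x)⁻¹ • x‖
  have hρ (x : E) : ρ x = ‖x‖ / gauge s x := by
    change ‖(gauge s x)⁻¹ • x‖ = _
    rw [norm_smul, norm_inv, Real.norm_of_nonneg (gauge_nonneg x), inv_mul_eq_div]
  have hρ_cont : ContinuousOn ρ {0}ᶜ :=
    (((continuous_gauge hc hs₀).continuousOn.inv₀ fun x hx =>
      (gauge_pos_of_isBounded hs₀ hb hx).ne').smul continuousOn_id).norm
  have hρ_const : ∀ x ≠ 0, ρ x = ρ x₀ := fun x hx =>
    (isConnected_compl_singleton_of_one_lt_rank hrank 0).isPreconnected.constant_of_mapsTo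
      hfin.isDiscrete hρ_cont
      (fun x hx => mem_image_of_mem _ (inv_gauge_smul_mem_frontier hc hs₀ hb hx)) hx hx₀
  have hr : 0 < ρ x₀ := by
    rw [hρ x₀]
    exact div_pos (norm_pos_iff.2 hx₀) (gauge_pos_of_isBounded hs₀ hb hx₀)
  refine ⟨ρ x₀, hc.eq_of_gauge_eq hs₀ hs (convex_closedBall 0 _) (closedBall_mem_nhds 0 hr)
    isClosed_closedBall (funext fun x => ?_)⟩
  rw [gauge_closedBall hr.le]
  rcases eq_or_ne x 0 with rfl | hx
  · simp
  rw [← hρ_const x hx, hρ x, div_div_cancel₀ (norm_ne_zero_iff.2 hx)]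

end Gauge

theorem IsCompact.exists_eq_closedBall_of_finrank_le_one [FiniteDimensional ℝ E]
    (hE : Module.finrank ℝ E ≤ 1) {s : Set E} (hs : IsCompact s) (hc : Convex ℝ s)
    (hne : s.Nonempty) (hsymm : -s = s) : ∃ r, s = closedBall 0 r := by
  have hbal : Balanced ℝ s :=
    (balanced_iff_neg_mem hc).2 fun x hx => by rw [← hsymm]; exact neg_mem_neg.2 hx
  obtain ⟨v, hv, hvmax⟩ := hs.exists_isMaxOn hne continuous_norm.continuousOn
  refine ⟨‖v‖, Subset.antisymm (fun x hx => mem_closedBall_zero_iff.2 (hvmax hx))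
    fun x hx => ?_⟩
  rw [mem_closedBall_zero_iff] at hx
  rcases eq_or_ne v 0 with rfl | hv₀
  · rw [norm_le_zero_iff.1 (by simpa using hx : ‖x‖ ≤ 0)]
    exact hbal.zero_mem hne
  have : Nontrivial E := ⟨⟨v, 0, hv₀⟩⟩
  obtain ⟨c, rfl⟩ := exists_smul_eq_of_finrank_eq_one (hE.antisymm Module.finrank_pos) hv₀ x
  rw [norm_smul] at hx
  exact hbal.smul_mem ((mul_le_iff_le_one_left (norm_pos_iff.2 hv₀)).1 hx) hv

section Orbit

variable {H : Subgroup (E ≃ₗᵢ[ℝ] E)} {V L : Set E}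

theorem orbit_subset_frontier (hH : ∀ g ∈ H, (fun x => g x) '' V = V)
    (hL : L ⊆ frontier V) : {y | ∃ g ∈ H, ∃ x ∈ L, y = g x} ⊆ frontier V := by
  rintro _ ⟨g, hg, x, hx, rfl⟩
  have h := (g.toHomeomorph.image_frontier V).subset (mem_image_of_mem _ (hL hx))
  rw [← hH g hg]
  exact h

theorem neg_orbit_eq_self (hneg : LinearIsometryEquiv.neg ℝ ∈ H) :
    -{y | ∃ g ∈ H, ∃ x ∈ L, y = g x} = {y | ∃ g ∈ H, ∃ x ∈ L, y = g x} := by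
  ext y
  constructor <;> rintro ⟨g, hg, x, hx, hy⟩
  · exact ⟨LinearIsometryEquiv.neg ℝ * g, H.mul_mem hneg hg, x, hx, by simp [← hy]⟩
  · exact ⟨LinearIsometryEquiv.neg ℝ * g, H.mul_mem hneg hg, x, hx, by simp [hy]⟩

end Orbit

theorem Equiv.image_eq_self_iff_mapsTo {α : Type*} (e : α ≃ α) (s : Set α) :
    e '' s = s ↔ MapsTo e s s ∧ MapsTo e.symm s s := by
  rw [Subset.antisymm_iff, ← mapsTo_iff_image_subset, e.image_eq_preimage_symm]
  rfl

section Stabilizer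

variable {F : Type*} [NormedAddCommGroup F] [InnerProductSpace ℝ F] [FiniteDimensional ℝ F]
  {H : Subgroup (F ≃ₗᵢ[ℝ] F)} {V : Set F}

theorem isCompact_image_toContinuousLinearMap_stabilizer (hV : IsClosed V)
    (hH : ∀ g, g ∈ H ↔ (fun x => g x) '' V = V) :
    IsCompact ((fun g : F ≃ₗᵢ[ℝ] F => (g : F →L[ℝ] F)) '' H) := by
  have hK : (fun g : F ≃ₗᵢ[ℝ] F => (g : F →L[ℝ] F)) '' H =
      {f : F →L[ℝ] F | f ∈ unitary (F →L[ℝ] F) ∧ MapsTo f V V ∧ MapsTo ⇑(star f) V V} := by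
    ext f
    constructor
    · rintro ⟨g, hg, rfl⟩
      refine ⟨(Unitary.linearIsometryEquiv.symm g).prop, ?_⟩
      rw [g.star_eq_symm]
      exact (g.toLinearEquiv.toEquiv.image_eq_self_iff_mapsTo V).1 ((hH g).1 hg)
    · rintro ⟨hf, hmaps⟩
      let g := Unitary.linearIsometryEquiv ⟨f, hf⟩
      exact ⟨g, (hH g).2 ((g.toLinearEquiv.toEquiv.image_eq_self_iff_mapsTo V).2 hmaps), rfl⟩
  rw [hK]
  refine isCompact_of_isClosed_isBounded ?_ ((isBounded_closedBall (x := 0) (r := 1)).subset ?_)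
  · have hmaps : IsClosed {f : F →L[ℝ] F | MapsTo f V V} := by
      simp only [MapsTo, ofPred_forall]
      exact isClosed_biInter fun v _ => hV.preimage (ContinuousLinearMap.apply ℝ F v).continuous
    exact isClosed_unitary.inter (hmaps.inter (hmaps.preimage continuous_star))
  · rintro f ⟨hf, -⟩
    exact mem_closedBall_zero_iff.2 (ContinuousLinearMap.opNorm_le_bound _ zero_le_one
      fun x => (ContinuousLinearMap.norm_map_of_mem_unitary hf x).trans_le (one_mul _).ge)

theorem isCompact_stabilizer_orbit {L : Set F} (hV : IsClosed V)
    (hH : ∀ g, g ∈ H ↔ (fun x => g x) '' V = V) (hL : IsCompact L) :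
    IsCompact {y | ∃ g ∈ H, ∃ x ∈ L, y = g x} := by
  have horbit : {y | ∃ g ∈ H, ∃ x ∈ L, y = g x} = (fun p : (F →L[ℝ] F) × F => p.1 p.2) ''
      (((fun g : F ≃ₗᵢ[ℝ] F => (g : F →L[ℝ] F)) '' H) ×ˢ L) := by
    ext y
    constructor
    · rintro ⟨g, hg, x, hx, rfl⟩
      exact ⟨(g, x), ⟨⟨g, hg, rfl⟩, hx⟩, rfl⟩
    · rintro ⟨⟨f, x⟩, ⟨⟨g, hg, rfl⟩, hx⟩, rfl⟩
      exact ⟨g, hg, x, hx, rfl⟩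
  rw [horbit]
  exact ((isCompact_image_toContinuousLinearMap_stabilizer hV hH).prod hL).image (by fun_prop)

end Stabilizer

/-- Lemma 3.7: for a symmetric compact convex body `V` which is not a Euclidean ball,
with stabilizer `H ≤ O(n)`, and a finite set `L ⊆ ∂V` whose convex hull has `0` in its
interior, the body `W = conv (H⬝L)` is a symmetric compact convex body which is not
strictly convex. -/
theorem conv_orbit_not_strictly_convex (n : ℕ)
    (V : Set (EuclideanSpace ℝ (Fin n)))
    (hVc : IsCompact V) (hVconv : Convex ℝ V)
    (hVint : (0 : EuclideanSpace ℝ (Fin n)) ∈ interior V)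
    (hVsymm : -V = V)
    (hVnotball : ¬ ∃ r : ℝ, V = Metric.closedBall (0 : EuclideanSpace ℝ (Fin n)) r)
    (H : Subgroup (EuclideanSpace ℝ (Fin n) ≃ₗᵢ[ℝ] EuclideanSpace ℝ (Fin n)))
    (hH : ∀ g, g ∈ H ↔ (fun x => g x) '' V = V)
    (L : Set (EuclideanSpace ℝ (Fin n))) (hLfin : L.Finite) (hLbd : L ⊆ frontier V)
    (hL0 : (0 : EuclideanSpace ℝ (Fin n)) ∈ interior (convexHull ℝ L))
    (W : Set (EuclideanSpace ℝ (Fin n)))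
    (hW : W = convexHull ℝ {y | ∃ g ∈ H, ∃ x ∈ L, y = g x}) :
    IsCompact W ∧ Convex ℝ W ∧ -W = W ∧ (interior W).Nonempty ∧
      ∃ x ∈ frontier W, x ∉ Set.extremePoints ℝ W := by
  set S := {y | ∃ g ∈ H, ∃ x ∈ L, y = g x}
  have hWcomp : IsCompact W :=
    hW ▸ (isCompact_stabilizer_orbit hVc.isClosed hH hLfin.isCompact).convexHull
  have hWconv : Convex ℝ W := hW ▸ convex_convexHull ℝ S
  have hW₀ : W ∈ 𝓝 0 := mem_interior_iff_mem_nhds.1 <|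
    interior_mono (hW ▸ convexHull_mono fun x hx => ⟨1, H.one_mem, x, hx, rfl⟩) hL0
  have hWsymm : -W = W := by
    rw [hW, ← convexHull_neg, neg_orbit_eq_self ((hH _).2 (by simpa using hVsymm))]
  refine ⟨hWcomp, hWconv, hWsymm, ⟨0, mem_interior_iff_mem_nhds.2 hW₀⟩, ?_⟩
  by_contra! hext
  have hfrS : frontier W ⊆ S := fun x hx => extremePoints_convexHull_subset (hW ▸ hext x hx)
  apply hVnotball
  rcases lt_or_ge n 2 with hn | hn
  · refine hVc.exists_eq_closedBall_of_finrank_le_one ?_ hVconv ⟨0, interior_subset hVint⟩ hVsymm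
    rw [finrank_euclideanSpace_fin]
    omega
  have hWV : W = V := hWconv.eq_of_frontier_subset_frontier hW₀ hWcomp.isClosed hWcomp.isBounded
    hVconv (mem_interior_iff_mem_nhds.1 hVint) hVc.isClosed
    (hfrS.trans (orbit_subset_frontier (fun g => (hH g).1) hLbd))
  have hnorms : norm '' frontier W ⊆ norm '' L := by
    rintro _ ⟨x, hx, rfl⟩
    obtain ⟨g, -, y, hy, rfl⟩ := hfrS hx
    exact ⟨y, hy, (g.norm_map y).symm⟩
  refine hWV ▸ hWconv.exists_eq_closedBall_of_finite_norm_image_frontier ?_ hW₀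
    hWcomp.isClosed hWcomp.isBounded ((hLfin.image norm).subset hnorms)
  rw [← Module.finrank_eq_rank, finrank_euclideanSpace_fin]
  exact_mod_cast hn
end
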